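/- arXiv:1610.07827 — 2 statements merged into one kernel-verified Lean document; each statement's English description precedes it below -/
import Mathlib

section
/- Let k be a field of characteristic zero and n ≥ 1. Consider the map α sending a tuple (a1,…,an) ∈ k^n with a1 ≠ 0 to the endomorphism of k[y1,…,yn] defined by yⱼ ↦ Σ over tuples (l1,…,lj) ∈ ℕ₀^j with Σ_i i·l_i = j of (|l|!/∏_i l_i!)·a_{|l|}·∏_i y_i^{l_i}, where |l| = Σ_i l_i. Then each such endomorphism is triangular (the image of yⱼ lies in k[y1,…,yⱼ]) with diagonal coefficient a1 on yⱼ, and hence is a k-algebra automorphism of k[y1,…,yn]. -/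
/-!
A triangular substitution `yⱼ ↦ cⱼ yⱼ + rⱼ`, with `cⱼ` a unit and `rⱼ` a polynomial in the
variables below `yⱼ`, is inverted by well-founded recursion: the inverse sends `yⱼ` to
`cⱼ⁻¹ (yⱼ - rⱼ(zᵢ : i < j))`, where the `zᵢ` are the already constructed images of the `yᵢ`.
The map `α(a)` is of this shape with `cⱼ = a₁`: among the tuples with `∑ i·lᵢ = j`, the only
one with `lⱼ ≠ 0` is the unit vector `eⱼ`, which contributes `a₁ yⱼ`.
-/

open MvPolynomial

/-- The coordinate polynomials of the map `α(a)`: writing the variables of `k[y₁,…,y_n]` as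
`X 0, …, X (n-1)` (so `X j` is `y_{j+1}`), the image of `y_{j+1}` is
`∑_{(l₁,…,l_{j+1}) ∈ ℕ₀^{j+1}, ∑ i·lᵢ = j+1} (|l|!/∏ lᵢ!) · a_{|l|} · ∏ yᵢ^{lᵢ}`, where
`|l| = ∑ lᵢ` and `a_r` denotes the `r`-th coefficient. (Each `lᵢ ≤ j+1`, so the tuples
are indexed by functions `Fin (j+1) → Fin (j+2)`.) -/
noncomputable def alphaPoly {k : Type*} [Field k] (n : ℕ) (a : ℕ → k) (j : Fin n) :
    MvPolynomial (Fin n) k :=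
  ∑ l ∈ Finset.univ.filter
      (fun l : Fin (j.1 + 1) → Fin (j.1 + 2) => ∑ i, (i.1 + 1) * (l i).1 = j.1 + 1),
    C (((∑ i, (l i).1).factorial : k) / (∏ i, ((l i).1.factorial : k)) * a (∑ i, (l i).1)) *
      ∏ i, (X (⟨i.1, by omega⟩ : Fin n)) ^ (l i).1

namespace MvPolynomial

variable {R σ : Type*} [CommRing R]

theorem aeval_eq_of_mem_supported {A : Type*} [CommRing A] [Algebra R A] {s : Set σ}
    {p : MvPolynomial σ R} (hp : p ∈ supported R s) {f g : σ → A} (h : s.EqOn f g) :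
    aeval f p = aeval g p :=
  AlgHom.eqOn_adjoin_iff.mpr (by rintro _ ⟨i, hi, rfl⟩; simp [h hi]) hp

section

variable {c : R} {j : σ} {r : MvPolynomial σ R}

theorem C_mul_X_add_mem_supported_le [Preorder σ] (hr : r ∈ supported R {i | i < j}) :
    C c * X j + r ∈ supported R {i | i ≤ j} :=
  Subalgebra.add_mem _
    (Subalgebra.mul_mem _ (Subalgebra.algebraMap_mem _ _) (Algebra.subset_adjoin ⟨j, le_rfl, rfl⟩))
    (supported_mono (fun _ ↦ le_of_lt) hr)

theorem coeff_single_C_mul_X_add {s : Set σ} (hr : r ∈ supported R s) (hj : j ∉ s) :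
    coeff (Finsupp.single j 1) (C c * X j + r) = c := by
  have hr_coeff : coeff (Finsupp.single j 1) r = 0 := by
    by_contra h
    exact hj (mem_supported.mp hr ((mem_vars_iff_mem_support j).mpr
      ⟨_, mem_support_iff.mpr h, by simp⟩))
  simp [hr_coeff]

end

section

variable [LinearOrder σ] [WellFoundedLT σ] (c : σ → Rˣ) (r : σ → MvPolynomial σ R)

noncomputable def triangularInv : σ → MvPolynomial σ R :=
  WellFoundedLT.fix fun j g ↦
    C (↑(c j)⁻¹ : R) * (X j - aeval (fun i ↦ if h : i < j then g i h else 0) (r j))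

variable {r} (hr : ∀ j, r j ∈ supported R {i | i < j})
include hr

theorem triangularInv_eq (j : σ) :
    triangularInv c r j = C (↑(c j)⁻¹ : R) * (X j - aeval (triangularInv c r) (r j)) := by
  rw [triangularInv, WellFoundedLT.fix_eq]
  exact congrArg _ (congrArg _ (aeval_eq_of_mem_supported (hr j) fun i hi ↦ dif_pos hi))

theorem aeval_triangularInv (j : σ) :
    aeval (triangularInv c r) (C (c j : R) * X j + r j) = X j := by
  rw [map_add, map_mul, aeval_C, aeval_X, triangularInv_eq c hr, algebraMap_eq, ← mul_assoc,
    ← C_mul, Units.mul_inv, C_1, one_mul, sub_add_cancel]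

theorem aeval_triangular_triangularInv (j : σ) :
    aeval (fun i ↦ C (c i : R) * X i + r i) (triangularInv c r j) = X j := by
  induction j using WellFoundedLT.induction with
  | ind j ih =>
    rw [triangularInv_eq c hr, map_mul, map_sub, aeval_C, aeval_X, ← AlgHom.comp_apply,
      comp_aeval, aeval_eq_of_mem_supported (hr j) (g := X) fun i hi ↦ ih i hi, aeval_X_left_apply,
      add_sub_cancel_right, algebraMap_eq, ← mul_assoc, ← C_mul, Units.inv_mul, C_1, one_mul]

noncomputable def triangularAlgEquiv : MvPolynomial σ R ≃ₐ[R] MvPolynomial σ R :=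
  AlgEquiv.ofAlgHom (aeval fun i ↦ C (c i : R) * X i + r i) (aeval (triangularInv c r))
    (algHom_ext fun j ↦ by simpa using aeval_triangular_triangularInv c hr j)
    (algHom_ext fun j ↦ by simpa using aeval_triangularInv c hr j)

end

end MvPolynomial

theorem Fin.eq_single_last_of_sum_mul_eq {m : ℕ} {l : Fin (m + 1) → ℕ}
    (hl : ∑ i, (i.1 + 1) * l i = m + 1) (hlast : l (Fin.last m) ≠ 0) :
    l = Pi.single (Fin.last m) 1 := by
  simp only [Fin.sum_univ_castSucc, Fin.val_last, Fin.val_castSucc] at hl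
  have hle := Nat.mul_le_mul_left (m + 1) (Nat.one_le_iff_ne_zero.mpr hlast)
  have hrest : ∑ i : Fin m, (i.1 + 1) * l i.castSucc = 0 := by omega
  have hone : l (Fin.last m) = 1 :=
    Nat.eq_of_mul_eq_mul_left m.succ_pos (by linarith)
  funext i
  induction i using Fin.lastCases with
  | last => simpa using hone
  | cast i =>
    have := Finset.sum_eq_zero_iff.mp hrest i (Finset.mem_univ i)
    simp_all [(Fin.castSucc_lt_last i).ne]

theorem alphaPoly_sub_mem_supported {k : Type*} [Field k] (n : ℕ) (a : ℕ → k) (j : Fin n) :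
    alphaPoly n a j - C (a 1) * X j ∈ supported k {i | i < j} := by
  set e : Fin (j.1 + 1) → Fin (j.1 + 2) := Pi.single (Fin.last j.1) 1 with he
  have he_val (i) : (e i).1 = (Pi.single (Fin.last j.1) 1 : Fin (j.1 + 1) → ℕ) i := by
    by_cases h : i = Fin.last j.1 <;> simp [he, h]
  have he_mem : e ∈ Finset.univ.filter
      (fun l : Fin (j.1 + 1) → Fin (j.1 + 2) ↦ ∑ i, (i.1 + 1) * (l i).1 = j.1 + 1) := by
    simp [he_val, Pi.single_apply]
  have he_term : C (((∑ i, (e i).1).factorial : k) / (∏ i, ((e i).1.factorial : k)) *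
      a (∑ i, (e i).1)) * ∏ i, (X (⟨i.1, by omega⟩ : Fin n)) ^ (e i).1 = C (a 1) * X j := by
    simp [he_val, Pi.single_apply, apply_ite]
  rw [alphaPoly, ← Finset.add_sum_erase _ _ he_mem, he_term, add_sub_cancel_left]
  refine Subalgebra.sum_mem _ fun l hl ↦ ?_
  obtain ⟨hne, hl⟩ := Finset.mem_erase.mp hl
  have hlast : (l (Fin.last j.1)).1 = 0 := by
    by_contra h
    refine hne (funext fun i ↦ Fin.ext ?_)
    rw [he_val, ← Fin.eq_single_last_of_sum_mul_eq (by simpa using hl) h]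
  refine Subalgebra.mul_mem _ (Subalgebra.algebraMap_mem _ _) (Subalgebra.prod_mem _ fun i _ ↦ ?_)
  by_cases hi : i = Fin.last j.1
  · simp [hi, hlast]
  · exact Subalgebra.pow_mem _ (X_mem_supported.mpr <| Fin.val_lt_last hi :
      X _ ∈ supported k {i | i < j}) _

theorem stmt13_general (k : Type*) [Field k] (n : ℕ)
    (a : ℕ → k) (ha : a 1 ≠ 0) :
    (∀ j : Fin n, alphaPoly n a j ∈ MvPolynomial.supported k {i : Fin n | i ≤ j}) ∧
    (∀ j : Fin n, MvPolynomial.coeff (Finsupp.single j 1) (alphaPoly n a j) = a 1) ∧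
    Function.Bijective
      (MvPolynomial.aeval (alphaPoly n a) :
        MvPolynomial (Fin n) k →ₐ[k] MvPolynomial (Fin n) k) := by
  set r := fun j ↦ alphaPoly n a j - C (a 1) * X j
  have hr : ∀ j, r j ∈ supported k {i | i < j} := alphaPoly_sub_mem_supported n a
  have hα : alphaPoly n a = fun j ↦ C (a 1) * X j + r j :=
    funext fun j ↦ (add_sub_cancel _ _).symm
  rw [hα]
  exact ⟨fun j ↦ C_mul_X_add_mem_supported_le (hr j),
    fun j ↦ coeff_single_C_mul_X_add (hr j) (lt_irrefl j),
    (triangularAlgEquiv (fun _ ↦ Units.mk0 (a 1) ha) hr).bijective⟩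

/-- For `k` a field of characteristic zero, `n ≥ 1` and `(a₁,…,a_n)` with
`a₁ ≠ 0`, the endomorphism `α(a)` of `k[y₁,…,y_n]` given by the universal formula is
triangular — the image of `yⱼ` involves only `y₁,…,yⱼ`, with coefficient `a₁` on `yⱼ` —
and is a `k`-algebra automorphism. -/
theorem stmt13 (k : Type*) [Field k] [CharZero k] (n : ℕ) (hn : 1 ≤ n)
    (a : ℕ → k) (ha : a 1 ≠ 0) :
    (∀ j : Fin n, alphaPoly n a j ∈ MvPolynomial.supported k {i : Fin n | i ≤ j}) ∧
    (∀ j : Fin n, MvPolynomial.coeff (Finsupp.single j 1) (alphaPoly n a j) = a 1) ∧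
    Function.Bijective
      (MvPolynomial.aeval (alphaPoly n a) :
        MvPolynomial (Fin n) k →ₐ[k] MvPolynomial (Fin n) k) :=
  stmt13_general k n a ha
end

section
/- Let k be a field of characteristic zero, n ≥ 1, and for a = (a1,…,an) ∈ k^n with a1 ≠ 0 let F_a(x) = Σ_{r=1}^n a_r x^r ∈ k[[x]], and define α(a) : k[y1,…,yn] → k[y1,…,yn] by α(a)(yⱼ) = Σ_{(l1,…,lj), Σ i·l_i = j} (|l|!/∏ l_i!)·a_{|l|}·∏ y_i^{l_i}. Then α is a group homomorphism: if F_c ≡ F_a ∘ F_b mod x^{n+1} (composition of power series, truncated), then α(c) = α(a) ∘ α(b) as endomorphisms of k[y1,…,yn]. -/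
/-! With `Y = ∑ᵢ yᵢ xⁱ` over `k[y₁, …, yₙ]`, the multinomial theorem shows that `α(a)(yⱼ)` is the
coefficient of `xʲ` in `F_a(Y)`. Applying `α(b)` to the coefficients of `Y` therefore gives a
series congruent to `F_b(Y)` modulo `xⁿ⁺¹`, so `α(b)(α(a)(yⱼ))` is the coefficient of `xʲ` in
`F_a(F_b(Y)) ≡ F_c(Y)`, which is `α(c)(yⱼ)`. -/

open MvPolynomial

/-- The truncated power series `F_a = ∑_{r=1}^n a_r x^r`, as a polynomial. -/
noncomputable def Ftrunc {k : Type*} [Field k] (n : ℕ) (a : ℕ → k) : Polynomial k :=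
  ∑ r ∈ Finset.range n, Polynomial.C (a (r + 1)) * Polynomial.X ^ (r + 1)

open Finset

-- The weight `∑ (i + 1) * m i` of `m` is the `x`-degree of `∏ (yᵢ x^(i+1)) ^ m i`.
section Weight
variable {N d : ℕ} {m : Fin N → ℕ}

theorem sum_le_of_weight_eq (h : ∑ i : Fin N, (i.1 + 1) * m i = d) : ∑ i, m i ≤ d :=
  h ▸ sum_le_sum fun i _ => Nat.le_mul_of_pos_left _ i.1.succ_pos

theorem sum_pos_of_weight_eq (hd : 0 < d) (h : ∑ i : Fin N, (i.1 + 1) * m i = d) :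
    0 < ∑ i, m i := by
  refine Nat.pos_of_ne_zero fun h0 => hd.ne' ?_
  rw [← h]
  simp [sum_eq_zero_iff.1 h0]

theorem mem_image_val_comp_iff :
    m ∈ (univ.filter fun l : Fin N → Fin (d + 1) => ∑ i, (i.1 + 1) * (l i).1 = d).image
      (fun l i => (l i).1) ↔ ∑ i, (i.1 + 1) * m i = d := by
  constructor
  · intro hm
    obtain ⟨l, hl, rfl⟩ := mem_image.1 hm
    exact (mem_filter.1 hl).2
  · intro h
    have hle i : m i < d + 1 :=
      Nat.lt_succ_of_le ((single_le_sum (fun _ _ => Nat.zero_le _) (mem_univ i)).trans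
        (sum_le_of_weight_eq h))
    exact mem_image.2 ⟨fun i => ⟨m i, hle i⟩, by simpa using h, rfl⟩

end Weight

theorem sum_range_sum_piAntidiag_weight {M : Type*} [AddCommMonoid M] {n d : ℕ} (hd : 0 < d)
    (hdn : d ≤ n) (f : ℕ → (Fin d → ℕ) → M) :
    ∑ r ∈ range n, ∑ m ∈ (piAntidiag univ (r + 1)).filter
        (fun m : Fin d → ℕ => ∑ i, (i.1 + 1) * m i = d), f (r + 1) m
      = ∑ l ∈ univ.filter (fun l : Fin d → Fin (d + 1) => ∑ i, (i.1 + 1) * (l i).1 = d),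
          f (∑ i, (l i).1) (fun i => (l i).1) := by
  set T := (univ.filter fun l : Fin d → Fin (d + 1) => ∑ i, (i.1 + 1) * (l i).1 = d).image
    (fun l i => (l i).1)
  have hT {m : Fin d → ℕ} : m ∈ T ↔ ∑ i, (i.1 + 1) * m i = d := mem_image_val_comp_iff
  rw [← sum_image (f := fun m => f (∑ i, m i) m)
      (fun _ _ _ _ h => funext fun i => Fin.ext (congrFun h i)),
    ← sum_fiberwise_of_maps_to (g := fun m : Fin d → ℕ => ∑ i, m i - 1) (t := range n)
      fun m hm => mem_range.2 (by have := sum_le_of_weight_eq (hT.1 hm); omega)]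
  refine sum_congr rfl fun r _ => ?_
  have hfiber : (piAntidiag univ (r + 1)).filter (fun m : Fin d → ℕ => ∑ i, (i.1 + 1) * m i = d)
      = T.filter fun m => ∑ i, m i - 1 = r := by
    ext m
    simp only [mem_filter, mem_piAntidiag, hT, mem_univ, implies_true, and_true]
    have heta : univ.sum m = ∑ i, m i := rfl
    constructor
    · rintro ⟨hm, hw⟩
      exact ⟨hw, by omega⟩
    · rintro ⟨hw, hm⟩
      have := sum_pos_of_weight_eq hd hw
      exact ⟨by omega, hw⟩
  rw [hfiber]
  refine sum_congr rfl fun m hm => ?_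
  obtain ⟨hw, hr⟩ := mem_filter.1 hm
  have := sum_pos_of_weight_eq hd (hT.1 hw)
  rw [show r + 1 = ∑ i, m i by omega]

theorem Nat.cast_multinomial_eq_div {α K : Type*} [Field K] [CharZero K] (s : Finset α)
    (f : α → ℕ) :
    (Nat.multinomial s f : K) =
      ((∑ i ∈ s, f i).factorial : K) / ∏ i ∈ s, ((f i).factorial : K) := by
  rw [eq_div_iff (by simp [Finset.prod_ne_zero_iff, Nat.factorial_ne_zero]), mul_comm]
  exact_mod_cast Nat.multinomial_spec s f

namespace Polynomial

theorem X_pow_dvd_sub_iff {A : Type*} [CommRing A] {P Q : A[X]} {N : ℕ} :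
    X ^ N ∣ P - Q ↔ ∀ d < N, P.coeff d = Q.coeff d := by
  simp only [X_pow_dvd_iff, coeff_sub, sub_eq_zero]

theorem X_pow_dvd_aeval_sub_aeval {R A : Type*} [CommRing R] [CommRing A] [Algebra R A]
    {P Q : A[X]} {N : ℕ} (h : X ^ N ∣ P - Q) (F : R[X]) : X ^ N ∣ aeval P F - aeval Q F := by
  simpa only [eval_map_algebraMap] using
    h.trans (sub_dvd_eval_sub P Q (F.map (algebraMap R A[X])))

theorem X_pow_dvd_aeval_sub_aeval_of_X_dvd {R A : Type*} [CommRing R] [CommRing A] [Algebra R A]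
    {P : A[X]} (hP : X ∣ P) {F G : R[X]} {N : ℕ} (h : X ^ N ∣ F - G) :
    X ^ N ∣ aeval P F - aeval P G := by
  obtain ⟨H, hH⟩ := h
  rw [← map_sub, hH, map_mul, map_pow, aeval_X]
  exact (pow_dvd_pow_of_dvd hP N).mul_right _

section CoeffPoly
variable {R : Type*} [CommRing R] {N : ℕ}

noncomputable def coeffPoly (g : Fin N → R) : R[X] :=
  ∑ i, C (g i) * X ^ (i.1 + 1)

theorem X_dvd_coeffPoly (g : Fin N → R) : X ∣ coeffPoly g :=
  dvd_sum fun i _ => (dvd_pow_self X (Nat.succ_ne_zero i)).mul_left _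

theorem coeff_coeffPoly_succ (g : Fin N → R) (i : Fin N) :
    (coeffPoly g).coeff (i + 1) = g i := by
  simp [coeffPoly, finsetSum_coeff, Fin.val_inj]

theorem map_coeffPoly {S : Type*} [CommRing S] (f : R →+* S) (g : Fin N → R) :
    (coeffPoly g).map f = coeffPoly (f ∘ g) := by
  simp [coeffPoly, Polynomial.map_sum]

theorem coeff_coeffPoly_pow (g : Fin N → R) (m d : ℕ) :
    (coeffPoly g ^ m).coeff d = ∑ l ∈ (piAntidiag univ m).filter
      (fun l => ∑ i, (i.1 + 1) * l i = d), Nat.multinomial univ l * ∏ i, g i ^ l i := by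
  rw [coeffPoly, sum_pow_eq_sum_piAntidiag, finsetSum_coeff, sum_filter]
  refine sum_congr rfl fun l _ => ?_
  simp only [mul_pow, ← C_pow, ← pow_mul, prod_mul_distrib, ← map_prod, prod_pow_eq_pow_sum,
    ← C_eq_natCast, ← mul_assoc, ← C_mul, coeff_C_mul_X_pow, mul_comm _ (l _), eq_comm]

theorem X_pow_dvd_coeffPoly_sub {g : Fin N → R} {P : R[X]} (h0 : P.coeff 0 = 0)
    (hg : ∀ i : Fin N, P.coeff (i + 1) = g i) : X ^ (N + 1) ∣ coeffPoly g - P := by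
  refine X_pow_dvd_sub_iff.2 fun d hd => ?_
  cases d with
  | zero => rw [h0, ← X_dvd_iff.1 (X_dvd_coeffPoly g)]
  | succ e => exact (coeff_coeffPoly_succ g ⟨e, by omega⟩).trans (hg ⟨e, by omega⟩).symm

end CoeffPoly

section Ftrunc
variable {k : Type*} [Field k] {n : ℕ} (a : ℕ → k)

theorem aeval_Ftrunc {A : Type*} [Semiring A] [Algebra k A] (P : A) :
    aeval P (Ftrunc n a) = ∑ r ∈ range n, a (r + 1) • P ^ (r + 1) := by
  simp [Ftrunc, Algebra.smul_def]

theorem X_dvd_aeval_Ftrunc {A : Type*} [CommRing A] [Algebra k A] {P : A[X]} (hP : X ∣ P) :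
    X ∣ aeval P (Ftrunc n a) := by
  rw [aeval_Ftrunc]
  refine dvd_sum fun r _ => ?_
  rw [Algebra.smul_def]
  exact (hP.trans (dvd_pow_self P r.succ_ne_zero)).mul_left _

theorem coeff_aeval_coeffPoly_Ftrunc [CharZero k] {R : Type*} [CommRing R] [Algebra k R]
    {d : ℕ} (hd : 0 < d) (hdn : d ≤ n) (g : Fin d → R) :
    (aeval (coeffPoly g) (Ftrunc n a)).coeff d
      = ∑ l ∈ univ.filter (fun l : Fin d → Fin (d + 1) => ∑ i, (i.1 + 1) * (l i).1 = d),
          algebraMap k R (((∑ i, (l i).1).factorial : k) / (∏ i, ((l i).1.factorial : k))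
            * a (∑ i, (l i).1)) * ∏ i, g i ^ (l i).1 := by
  simp only [aeval_Ftrunc, finsetSum_coeff, coeff_smul, coeff_coeffPoly_pow, smul_sum]
  rw [sum_range_sum_piAntidiag_weight hd hdn
    (fun r m => a r • ((Nat.multinomial univ m : R) * ∏ i, g i ^ m i))]
  refine sum_congr rfl fun l _ => ?_
  rw [← Nat.cast_multinomial_eq_div, map_mul, map_natCast, Algebra.smul_def]
  ring

end Ftrunc

end Polynomial

open Polynomial (coeffPoly X_dvd_coeffPoly coeff_coeffPoly_succ X_pow_dvd_sub_iff
  X_pow_dvd_coeffPoly_sub X_pow_dvd_aeval_sub_aeval X_pow_dvd_aeval_sub_aeval_of_X_dvd)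

theorem coeff_aeval_coeffPoly_X_Ftrunc {k : Type*} [Field k] [CharZero k] {n : ℕ} (a : ℕ → k)
    (j : Fin n) :
    (Polynomial.aeval (coeffPoly (X : Fin n → MvPolynomial (Fin n) k)) (Ftrunc n a)).coeff (j + 1)
      = alphaPoly n a j := by
  -- only `y₁, …, y_{j+1}` contribute to the coefficient of `x^(j+1)`
  have htrunc : Polynomial.X ^ (j.1 + 1 + 1) ∣
      coeffPoly (fun i : Fin (j.1 + 1) => (X ⟨i, by omega⟩ : MvPolynomial (Fin n) k))
        - coeffPoly X :=
    X_pow_dvd_coeffPoly_sub (Polynomial.X_dvd_iff.1 (X_dvd_coeffPoly X))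
      fun i => coeff_coeffPoly_succ X ⟨i, by omega⟩
  rw [← X_pow_dvd_sub_iff.1 (X_pow_dvd_aeval_sub_aeval htrunc _) _
    (Nat.lt_succ_self _), Polynomial.coeff_aeval_coeffPoly_Ftrunc a j.1.succ_pos j.2,
    MvPolynomial.algebraMap_eq, alphaPoly]

theorem stmt14_general (k : Type*) [Field k] [CharZero k] (n : ℕ)
    (a b c : ℕ → k)
    (hc : ∀ r ≤ n, Polynomial.coeff (Ftrunc n c) r =
      Polynomial.coeff ((Ftrunc n a).comp (Ftrunc n b)) r) :
    ∀ j : Fin n,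
      MvPolynomial.aeval (alphaPoly n b) (alphaPoly n a j) = alphaPoly n c j := by
  intro j
  set Y := coeffPoly (X : Fin n → MvPolynomial (Fin n) k)
  set φ := MvPolynomial.aeval (R := k) (alphaPoly n b)
  have hYφ : Polynomial.map φ Y = coeffPoly (alphaPoly n b) := by
    rw [Polynomial.map_coeffPoly]
    congr 1
    funext i
    simp [φ]
  have hYb : Polynomial.X ^ (n + 1) ∣ Polynomial.map φ Y - Polynomial.aeval Y (Ftrunc n b) := by
    refine hYφ ▸ X_pow_dvd_coeffPoly_sub ?_ (coeff_aeval_coeffPoly_X_Ftrunc b)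
    exact Polynomial.X_dvd_iff.1 (Polynomial.X_dvd_aeval_Ftrunc b (X_dvd_coeffPoly X))
  have hcomp : Polynomial.X ^ (n + 1) ∣ (Ftrunc n a).comp (Ftrunc n b) - Ftrunc n c :=
    X_pow_dvd_sub_iff.2 fun d hd => (hc d (by omega)).symm
  calc φ (alphaPoly n a j)
      = φ ((Polynomial.aeval Y (Ftrunc n a)).coeff (j + 1)) := by
        rw [coeff_aeval_coeffPoly_X_Ftrunc]
    _ = (Polynomial.aeval (Polynomial.map φ Y) (Ftrunc n a)).coeff (j + 1) := by
        rw [← Polynomial.coeff_mapAlgHom_apply, ← Polynomial.aeval_algHom_apply]; rfl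
    _ = (Polynomial.aeval (Polynomial.aeval Y (Ftrunc n b)) (Ftrunc n a)).coeff (j + 1) :=
        X_pow_dvd_sub_iff.1 (X_pow_dvd_aeval_sub_aeval hYb _) _ (by omega)
    _ = (Polynomial.aeval Y ((Ftrunc n a).comp (Ftrunc n b))).coeff (j + 1) := by
        rw [Polynomial.aeval_comp]
    _ = (Polynomial.aeval Y (Ftrunc n c)).coeff (j + 1) :=
        X_pow_dvd_sub_iff.1 (X_pow_dvd_aeval_sub_aeval_of_X_dvd (X_dvd_coeffPoly X) hcomp) _
          (by omega)
    _ = alphaPoly n c j := coeff_aeval_coeffPoly_X_Ftrunc c j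

/-- `α` is a group homomorphism from the group of truncated power series
`∑_{r=1}^n a_r x^r` (`a₁ ≠ 0`) under composition-mod-`x^{n+1}` to polynomial self-maps of
affine `n`-space under composition: if `F_c ≡ F_a ∘ F_b mod x^{n+1}` then
`α(c) = α(a) ∘ α(b)` (composition of the polynomial maps, expressed on coordinates by
substituting the coordinates of `α(b)` into those of `α(a)`). -/
theorem stmt14 (k : Type*) [Field k] [CharZero k] (n : ℕ) (hn : 1 ≤ n)
    (a b c : ℕ → k) (ha : a 1 ≠ 0) (hb : b 1 ≠ 0)
    (hc : ∀ r ≤ n, Polynomial.coeff (Ftrunc n c) r =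
      Polynomial.coeff ((Ftrunc n a).comp (Ftrunc n b)) r) :
    ∀ j : Fin n,
      MvPolynomial.aeval (alphaPoly n b) (alphaPoly n a j) = alphaPoly n c j :=
  stmt14_general k n a b c hc
end
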